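/- arXiv:2504.02448 — 4 statements merged into one kernel-verified Lean document; each statement's English description precedes it below -/
import Mathlib

section
/- Let T be a rooted tree with root r, where each vertex v is labeled l(v) = dist(v, r) mod 2 (so l(r) = 0), and each set of children carries a total order. Then the Tree-to-Path algorithm (which, for each non-root vertex, adds one directed edge determined by its label, its ordered siblings and its children as in the four cases per label) outputs a directed Hamiltonian path P on the vertices of T with Beg(P) = r and End(P) equal to the minimum child of r. -/
variable {V : Type*}

/-- Children of `v` under parent map `p` with root `r`. -/
def t2pChild [Fintype V] [LinearOrder V] (r : V) (p : V → V) (v : V) : Finset V :=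
  Finset.univ.filter (fun u => u ≠ r ∧ p u = v)

/-- Siblings of `v` greater than `v`. -/
def t2pRSib [Fintype V] [LinearOrder V] (r : V) (p : V → V) (v : V) : Finset V :=
  (t2pChild r p (p v)).filter (fun w => v < w)

/-- Siblings of `v` smaller than `v`. -/
def t2pLSib [Fintype V] [LinearOrder V] (r : V) (p : V → V) (v : V) : Finset V :=
  (t2pChild r p (p v)).filter (fun w => w < v)

/-- The directed edge added by the Tree-to-Path algorithm for a non-root vertex `v`,
where `l` is the label function (only its parity matters).  For `l v` odd the edge goes
from `p v` (resp. the minimum greater sibling) to `v` (resp. the maximum child of `v`);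
for `l v` even it goes from `v` (resp. the minimum child of `v`) to `p v`
(resp. the maximum smaller sibling). -/
def t2pEdge [Fintype V] [LinearOrder V] (r : V) (p : V → V) (l : V → ℕ) (v : V) : V × V :=
  if l v % 2 = 1 then
    (if h : (t2pRSib r p v).Nonempty then (t2pRSib r p v).min' h else p v,
     if h : (t2pChild r p v).Nonempty then (t2pChild r p v).max' h else v)
  else
    (if h : (t2pChild r p v).Nonempty then (t2pChild r p v).min' h else v,
     if h : (t2pLSib r p v).Nonempty then (t2pLSib r p v).max' h else p v)


/-!
Vertices of odd and even depth are traversed in opposite directions. By induction on subtrees,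
the edges produced by the proper descendants of `v` form a Hamiltonian path of the subtree of `v`
which runs from the maximal child of `v` to `v` when `v` has odd depth, and from `v` to its
minimal child when `v` has even depth (the one-vertex path if `v` is a leaf). In both cases the
paths of the children are concatenated in decreasing order of the children, and the edge produced
by each child joins its own path to that of the adjacent sibling, or to `v` for the extreme child.
At the root this is a Hamiltonian path from `r` to its minimal child made of algorithm edges;
since the algorithm produces at most `|V| - 1` edges, these are all of them.
-/

open Finset

section HamPath

variable {α : Type*} [DecidableEq α]

def HasHamPath (R : α → α → Prop) (s : Finset α) (a b : α) : Prop :=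
  ∃ l : List α, l.Nodup ∧ l.toFinset = s ∧ l.IsChain R ∧ l.head? = some a ∧ l.getLast? = some b

theorem HasHamPath.singleton (R : α → α → Prop) (a : α) : HasHamPath R {a} a a :=
  ⟨[a], List.nodup_singleton a, rfl, List.isChain_singleton a, rfl, rfl⟩

theorem HasHamPath.append {R : α → α → Prop} {s t : Finset α} {a b c e : α}
    (h₁ : HasHamPath R s a b) (h₂ : HasHamPath R t c e) (hst : Disjoint s t) (hbc : R b c) :
    HasHamPath R (s ∪ t) a e := by
  obtain ⟨l₁, hnd₁, rfl, hch₁, hhead₁, hlast₁⟩ := h₁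
  obtain ⟨l₂, hnd₂, rfl, hch₂, hhead₂, hlast₂⟩ := h₂
  refine ⟨l₁ ++ l₂, hnd₁.append hnd₂ (List.disjoint_toFinset_iff_disjoint.mp hst),
    List.toFinset_append, hch₁.append hch₂ ?_, by simp [hhead₁], by simp [hlast₂]⟩
  simp [hlast₁, hhead₂, hbc]

theorem List.Nodup.mem_iff_exists_consecutive {E : Finset (α × α)} {l : List α} (hl : l.Nodup)
    (hchain : l.IsChain fun x y => (x, y) ∈ E) (hE : E.card < l.length) (x y : α) :
    (x, y) ∈ E ↔ ∃ i, ∃ h : i + 1 < l.length, x = l[i] ∧ y = l[i + 1] := by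
  let C : Finset (α × α) := (univ : Finset (Fin (l.length - 1))).image
    fun i => (l[i.1]'(by omega), l[i.1 + 1]'(by omega))
  have hCE : C ⊆ E := by
    simp only [C, image_subset_iff, mem_univ, forall_const]
    exact fun i => List.isChain_iff_getElem.mp hchain i (by omega)
  have hC : C.card = l.length - 1 := by
    rw [card_image_of_injective, card_univ, Fintype.card_fin]
    intro i j hij
    exact Fin.ext ((hl.getElem_inj_iff).mp (congrArg Prod.fst hij))
  rw [← eq_of_subset_of_card_le hCE (by omega)]
  simp only [C, mem_image, mem_univ, true_and, Prod.mk.injEq]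
  constructor
  · rintro ⟨i, rfl, rfl⟩
    exact ⟨i, by omega, rfl, rfl⟩
  · rintro ⟨i, hi, rfl, rfl⟩
    exact ⟨⟨i, by omega⟩, rfl, rfl⟩

theorem HasHamPath.exists_equiv [Fintype α] {E : Finset (α × α)} {a b : α}
    (h : HasHamPath (fun x y => (x, y) ∈ E) univ a b) (hE : E.card < Fintype.card α) :
    ∃ f : Fin (Fintype.card α) ≃ α,
      (∀ h0, f ⟨0, h0⟩ = a) ∧ (∀ h1, f ⟨Fintype.card α - 1, h1⟩ = b) ∧
      ∀ x y, (x, y) ∈ E ↔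
        ∃ i, ∃ h : i + 1 < Fintype.card α, x = f ⟨i, by omega⟩ ∧ y = f ⟨i + 1, h⟩ := by
  obtain ⟨l, hnd, hl, hch, hhead, hlast⟩ := h
  have hmem : ∀ x, x ∈ l := fun x => by simp [← List.mem_toFinset, hl]
  have hlen : l.length = Fintype.card α := by
    rw [← List.toFinset_card_of_nodup hnd, hl, card_univ]
  refine ⟨(finCongr hlen.symm).trans (hnd.getEquivOfForallMemList l hmem), fun h0 => ?_,
    fun h1 => ?_, fun x y => ?_⟩
  · simpa [List.head?_eq_getElem?, hlen, h0] using hhead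
  · simpa [List.getLast?_eq_getElem?, hlen, h1] using hlast
  · rw [hnd.mem_iff_exists_consecutive hch (hlen ▸ hE)]
    simp [hlen]

end HamPath

namespace Finset

variable {α : Type*} [LinearOrder α] {s : Finset α} {a b : α}

theorem filter_le_eq_insert_filter_lt (ha : a ∈ s) :
    s.filter (a ≤ ·) = insert a (s.filter (a < ·)) := by
  ext x
  simp only [mem_filter, mem_insert, le_iff_eq_or_lt]
  constructor
  · rintro ⟨hx, rfl | h⟩ <;> simp_all
  · rintro (rfl | ⟨hx, h⟩) <;> simp_all

theorem filter_lt_eq_filter_le_of_isLeast (hb : IsLeast ↑(s.filter (a < ·)) b) :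
    s.filter (a < ·) = s.filter (b ≤ ·) := by
  have hab := (mem_filter.mp hb.1).2
  ext x
  simp only [mem_filter]
  exact ⟨fun hx => ⟨hx.1, hb.2 (mem_filter.mpr hx)⟩, fun hx => ⟨hx.1, hab.trans_le hx.2⟩⟩

theorem isGreatest_filter_lt_of_isLeast (ha : a ∈ s) (hb : IsLeast ↑(s.filter (a < ·)) b) :
    IsGreatest ↑(s.filter (· < b)) a := by
  refine ⟨mem_filter.mpr ⟨ha, (mem_filter.mp hb.1).2⟩, fun x hx => ?_⟩
  rw [mem_coe, mem_filter] at hx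
  by_contra! hax
  exact (hb.2 (mem_filter.mpr ⟨hx.1, hax⟩)).not_gt hx.2

theorem isGreatest_of_filter_lt_eq_empty (ha : a ∈ s) (h : s.filter (a < ·) = ∅) :
    IsGreatest ↑s a :=
  ⟨ha, fun x hx => not_lt.mp fun hax =>
    (eq_empty_iff_forall_notMem.mp h) x (mem_filter.mpr ⟨hx, hax⟩)⟩

end Finset

namespace TreeToPath

variable {r : V} {p : V → V} {d : V → ℕ}

structure IsDepth (r : V) (p : V → V) (d : V → ℕ) : Prop where
  root : d r = 0
  succ_parent : ∀ v, v ≠ r → d v = d (p v) + 1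

theorem IsDepth.eq_root_of_eq_zero (hd : IsDepth r p d) {v : V} (h : d v = 0) : v = r := by
  by_contra hv
  have := hd.succ_parent v hv
  omega

theorem IsDepth.depth_iterate (hd : IsDepth r p d) (u : V) {k : ℕ} (hk : k ≤ d u) :
    d (p^[k] u) = d u - k := by
  induction k with
  | zero => rfl
  | succ k ih =>
    have hne : p^[k] u ≠ r := fun h => by
      have := ih (by omega)
      rw [h, hd.root] at this
      omega
    rw [Function.iterate_succ_apply', ← tsub_tsub, ← ih (by omega), hd.succ_parent _ hne]
    rfl

variable [Fintype V] [LinearOrder V]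

variable (p d) in
def subtree (v : V) : Finset V :=
  univ.filter fun u => d v ≤ d u ∧ p^[d u - d v] u = v

theorem mem_t2pChild {u v : V} : u ∈ t2pChild r p v ↔ u ≠ r ∧ p u = v := by
  simp [t2pChild]

theorem IsDepth.depth_of_mem_child (hd : IsDepth r p d) {c v : V} (hc : c ∈ t2pChild r p v) :
    d c = d v + 1 := by
  obtain ⟨hcr, rfl⟩ := mem_t2pChild.mp hc
  exact hd.succ_parent c hcr

theorem IsDepth.notMem_subtree_of_mem_child (hd : IsDepth r p d) {c v : V}
    (hc : c ∈ t2pChild r p v) : v ∉ subtree p d c := by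
  have := hd.depth_of_mem_child hc
  simp only [subtree, mem_filter, mem_univ, true_and]
  omega

theorem IsDepth.disjoint_subtree (hd : IsDepth r p d) {c c' v : V} (hc : c ∈ t2pChild r p v)
    (hc' : c' ∈ t2pChild r p v) (hne : c ≠ c') :
    Disjoint (subtree p d c) (subtree p d c') := by
  refine disjoint_left.mpr fun u hu hu' => hne ?_
  simp only [subtree, mem_filter, mem_univ, true_and] at hu hu'
  rw [← hu.2, ← hu'.2, hd.depth_of_mem_child hc, hd.depth_of_mem_child hc']

theorem IsDepth.subtree_eq_insert_biUnion (hd : IsDepth r p d) (v : V) :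
    subtree p d v = insert v ((t2pChild r p v).biUnion (subtree p d)) := by
  ext u
  simp only [subtree, mem_insert, mem_biUnion, mem_filter, mem_univ, true_and]
  constructor
  · rintro ⟨hle, hu⟩
    rcases hle.eq_or_lt with heq | hlt
    · left
      rwa [heq, Nat.sub_self, Function.iterate_zero_apply] at hu
    · right
      set c := p^[d u - d v - 1] u
      have hdc : d c = d v + 1 := by rw [hd.depth_iterate u (by omega)]; omega
      have hpc : p c = v := by
        rwa [show d u - d v = d u - d v - 1 + 1 by omega, Function.iterate_succ_apply'] at hu
      refine ⟨c, mem_t2pChild.mpr ⟨fun h => by rw [h, hd.root] at hdc; omega, hpc⟩, by omega, ?_⟩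
      rw [hdc, show d u - (d v + 1) = d u - d v - 1 by omega]
  · rintro (rfl | ⟨c, hc, hle, hu⟩)
    · simp
    · rw [hd.depth_of_mem_child hc] at hle hu
      refine ⟨by omega, ?_⟩
      rw [show d u - d v = d u - (d v + 1) + 1 by omega, Function.iterate_succ_apply', hu,
        (mem_t2pChild.mp hc).2]

theorem IsDepth.card_subtree_lt (hd : IsDepth r p d) {c v : V} (hc : c ∈ t2pChild r p v) :
    (subtree p d c).card < (subtree p d v).card := by
  rw [hd.subtree_eq_insert_biUnion v]
  refine card_lt_card ⟨fun u hu => mem_insert_of_mem (mem_biUnion.mpr ⟨c, hc, hu⟩),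
    fun h => hd.notMem_subtree_of_mem_child hc (h (mem_insert_self v _))⟩

theorem IsDepth.subtree_root (hd : IsDepth r p d) : subtree p d r = univ := by
  refine eq_univ_of_forall fun u => ?_
  simp only [subtree, mem_filter, mem_univ, true_and, hd.root, Nat.sub_zero, zero_le]
  exact hd.eq_root_of_eq_zero (by rw [hd.depth_iterate u le_rfl, Nat.sub_self])

variable (r p d) in
def edges : Finset (V × V) :=
  (univ.filter (· ≠ r)).image (t2pEdge r p d)

variable (r p d) in
def IsEdge (a b : V) : Prop :=
  (a, b) ∈ edges r p d

variable (r p) in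
def maxChildOrSelf (v : V) : V :=
  if h : (t2pChild r p v).Nonempty then (t2pChild r p v).max' h else v

variable (r p) in
def minChildOrSelf (v : V) : V :=
  if h : (t2pChild r p v).Nonempty then (t2pChild r p v).min' h else v

theorem card_edges_lt : (edges r p d).card < Fintype.card V :=
  calc (edges r p d).card ≤ (univ.filter (· ≠ r)).card := card_image_le
    _ < Fintype.card V := card_lt_card (filter_ssubset.mpr ⟨r, mem_univ r, not_not.mpr rfl⟩)

theorem isEdge_of_t2pEdge_eq {v a b : V} (hv : v ≠ r) (h : t2pEdge r p d v = (a, b)) :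
    IsEdge r p d a b :=
  mem_image.mpr ⟨v, mem_filter.mpr ⟨mem_univ v, hv⟩, h⟩

theorem t2pEdge_of_odd_of_isLeast {v c : V} (hv : d v % 2 = 1)
    (hc : IsLeast ↑(t2pRSib r p v) c) : t2pEdge r p d v = (c, maxChildOrSelf r p v) := by
  have hne : (t2pRSib r p v).Nonempty := ⟨c, hc.1⟩
  rw [t2pEdge, if_pos hv, dif_pos hne, (isLeast_min' _ hne).unique hc]
  rfl

theorem t2pEdge_of_odd_of_rSib_eq_empty {v : V} (hv : d v % 2 = 1) (h : t2pRSib r p v = ∅) :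
    t2pEdge r p d v = (p v, maxChildOrSelf r p v) := by
  rw [t2pEdge, if_pos hv, dif_neg (not_nonempty_iff_eq_empty.mpr h)]
  rfl

theorem t2pEdge_of_even_of_isGreatest {v c : V} (hv : d v % 2 = 0)
    (hc : IsGreatest ↑(t2pLSib r p v) c) : t2pEdge r p d v = (minChildOrSelf r p v, c) := by
  have hne : (t2pLSib r p v).Nonempty := ⟨c, hc.1⟩
  rw [t2pEdge, if_neg (by omega), dif_pos hne, (isGreatest_max' _ hne).unique hc]
  rfl

theorem t2pEdge_of_even_of_lSib_eq_empty {v : V} (hv : d v % 2 = 0) (h : t2pLSib r p v = ∅) :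
    t2pEdge r p d v = (minChildOrSelf r p v, p v) := by
  rw [t2pEdge, if_neg (by omega), dif_neg (not_nonempty_iff_eq_empty.mpr h)]
  rfl

theorem t2pRSib_eq_filter {c v : V} (hc : c ∈ t2pChild r p v) :
    t2pRSib r p c = (t2pChild r p v).filter (c < ·) := by
  rw [t2pRSib, (mem_t2pChild.mp hc).2]

theorem t2pLSib_eq_filter {c v : V} (hc : c ∈ t2pChild r p v) :
    t2pLSib r p c = (t2pChild r p v).filter (· < c) := by
  rw [t2pLSib, (mem_t2pChild.mp hc).2]

theorem IsDepth.notMem_biUnion_subtree_child (hd : IsDepth r p d) (v : V) :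
    v ∉ (t2pChild r p v).biUnion (subtree p d) := by
  simp only [mem_biUnion, not_exists, not_and]
  exact fun c hc => hd.notMem_subtree_of_mem_child hc

theorem IsDepth.disjoint_biUnion_subtree (hd : IsDepth r p d) {c v : V} {s : Finset V}
    (hc : c ∈ t2pChild r p v) (hs : s ⊆ t2pChild r p v) (hcs : c ∉ s) :
    Disjoint (s.biUnion (subtree p d)) (subtree p d c) :=
  (disjoint_biUnion_left _ _ _).mpr fun _ hw =>
    hd.disjoint_subtree (hs hw) hc fun h => hcs (h ▸ hw)

theorem IsDepth.hasHamPath_upperSiblings_of_odd (hd : IsDepth r p d) {v : V} (hv : d v % 2 = 1)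
    (ih : ∀ c ∈ t2pChild r p v,
      HasHamPath (IsEdge r p d) (subtree p d c) c (minChildOrSelf r p c))
    (c : V) (hc : c ∈ t2pChild r p v) :
    HasHamPath (IsEdge r p d) (((t2pChild r p v).filter (c ≤ ·)).biUnion (subtree p d))
      (maxChildOrSelf r p v) (minChildOrSelf r p c) := by
  induction c using WellFoundedGT.induction with
  | _ c IH =>
  rw [filter_le_eq_insert_filter_lt hc, biUnion_insert]
  by_cases hR : (t2pRSib r p c).Nonempty
  · set b := (t2pRSib r p c).min' hR
    have hb : IsLeast ↑((t2pChild r p v).filter (c < ·)) b :=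
      t2pRSib_eq_filter hc ▸ isLeast_min' _ hR
    obtain ⟨hbv, hcb⟩ := mem_filter.mp hb.1
    have hbeven : d b % 2 = 0 := by have := hd.depth_of_mem_child hbv; omega
    have hedge : IsEdge r p d (minChildOrSelf r p b) c :=
      isEdge_of_t2pEdge_eq (mem_t2pChild.mp hbv).1 (t2pEdge_of_even_of_isGreatest hbeven
        (t2pLSib_eq_filter hbv ▸ isGreatest_filter_lt_of_isLeast hc hb))
    rw [filter_lt_eq_filter_le_of_isLeast hb, union_comm]
    exact (IH b hcb hbv).append (ih c hc)
      (hd.disjoint_biUnion_subtree hc (filter_subset _ _) (by simp [hcb])) hedge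
  · rw [t2pRSib_eq_filter hc, not_nonempty_iff_eq_empty] at hR
    have hmax : maxChildOrSelf r p v = c := by
      rw [maxChildOrSelf, dif_pos ⟨c, hc⟩]
      exact (isGreatest_max' _ _).unique (isGreatest_of_filter_lt_eq_empty hc hR)
    rw [hR, biUnion_empty, union_empty, hmax]
    exact ih c hc

theorem IsDepth.hasHamPath_upperSiblings_of_even (hd : IsDepth r p d) {v : V} (hv : d v % 2 = 0)
    (ih : ∀ c ∈ t2pChild r p v,
      HasHamPath (IsEdge r p d) (subtree p d c) (maxChildOrSelf r p c) c)
    (c : V) (hc : c ∈ t2pChild r p v) :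
    HasHamPath (IsEdge r p d)
      (insert v (((t2pChild r p v).filter (c ≤ ·)).biUnion (subtree p d))) v c := by
  induction c using WellFoundedGT.induction with
  | _ c IH =>
  obtain ⟨hcr, hpc⟩ := mem_t2pChild.mp hc
  have hcodd : d c % 2 = 1 := by have := hd.depth_of_mem_child hc; omega
  rw [filter_le_eq_insert_filter_lt hc, biUnion_insert]
  by_cases hR : (t2pRSib r p c).Nonempty
  · set b := (t2pRSib r p c).min' hR
    have hb : IsLeast ↑((t2pChild r p v).filter (c < ·)) b :=
      t2pRSib_eq_filter hc ▸ isLeast_min' _ hR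
    obtain ⟨hbv, hcb⟩ := mem_filter.mp hb.1
    have hedge : IsEdge r p d b (maxChildOrSelf r p c) :=
      isEdge_of_t2pEdge_eq hcr (t2pEdge_of_odd_of_isLeast hcodd (isLeast_min' _ hR))
    have hdisj : Disjoint (insert v (((t2pChild r p v).filter (b ≤ ·)).biUnion (subtree p d)))
        (subtree p d c) :=
      disjoint_insert_left.mpr ⟨hd.notMem_subtree_of_mem_child hc,
        hd.disjoint_biUnion_subtree hc (filter_subset _ _) (by simp [hcb])⟩
    rw [filter_lt_eq_filter_le_of_isLeast hb, union_comm, ← insert_union]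
    exact (IH b hcb hbv).append (ih c hc) hdisj hedge
  · have hedge : IsEdge r p d v (maxChildOrSelf r p c) :=
      isEdge_of_t2pEdge_eq hcr (hpc ▸ t2pEdge_of_odd_of_rSib_eq_empty hcodd
        (not_nonempty_iff_eq_empty.mp hR))
    rw [t2pRSib_eq_filter hc, not_nonempty_iff_eq_empty] at hR
    rw [hR, biUnion_empty, union_empty, insert_eq]
    exact (HasHamPath.singleton _ v).append (ih c hc)
      (disjoint_singleton_left.mpr (hd.notMem_subtree_of_mem_child hc)) hedge

theorem IsDepth.hasHamPath_subtree_of_odd (hd : IsDepth r p d) {v : V} (hv : d v % 2 = 1)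
    (ih : ∀ c ∈ t2pChild r p v,
      HasHamPath (IsEdge r p d) (subtree p d c) c (minChildOrSelf r p c)) :
    HasHamPath (IsEdge r p d) (subtree p d v) (maxChildOrSelf r p v) v := by
  rw [hd.subtree_eq_insert_biUnion v]
  by_cases hne : (t2pChild r p v).Nonempty
  · set m := (t2pChild r p v).min' hne
    have hm : IsLeast ↑(t2pChild r p v) m := isLeast_min' _ hne
    obtain ⟨hmr, hpm⟩ := mem_t2pChild.mp hm.1
    have hmeven : d m % 2 = 0 := by have := hd.depth_of_mem_child hm.1; omega
    have hlsib : t2pLSib r p m = ∅ := by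
      rw [t2pLSib_eq_filter hm.1]
      exact filter_false_of_mem fun x hx => not_lt.mpr (hm.2 hx)
    have hedge : IsEdge r p d (minChildOrSelf r p m) v :=
      isEdge_of_t2pEdge_eq hmr (hpm ▸ t2pEdge_of_even_of_lSib_eq_empty hmeven hlsib)
    have hupper := hd.hasHamPath_upperSiblings_of_odd hv ih m hm.1
    rw [filter_true_of_mem fun x hx => hm.2 hx] at hupper
    rw [insert_eq, union_comm]
    exact hupper.append (.singleton _ v)
      (disjoint_singleton_right.mpr (hd.notMem_biUnion_subtree_child v)) hedge
  · rw [maxChildOrSelf, dif_neg hne, not_nonempty_iff_eq_empty.mp hne, biUnion_empty]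
    exact .singleton _ v

theorem IsDepth.hasHamPath_subtree_of_even (hd : IsDepth r p d) {v : V} (hv : d v % 2 = 0)
    (ih : ∀ c ∈ t2pChild r p v,
      HasHamPath (IsEdge r p d) (subtree p d c) (maxChildOrSelf r p c) c) :
    HasHamPath (IsEdge r p d) (subtree p d v) v (minChildOrSelf r p v) := by
  rw [hd.subtree_eq_insert_biUnion v, minChildOrSelf]
  by_cases hne : (t2pChild r p v).Nonempty
  · rw [dif_pos hne]
    have hupper := hd.hasHamPath_upperSiblings_of_even hv ih _ (min'_mem _ hne)
    rwa [filter_true_of_mem fun x hx => min'_le _ x hx] at hupper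
  · rw [dif_neg hne, not_nonempty_iff_eq_empty.mp hne, biUnion_empty]
    exact .singleton _ v

theorem IsDepth.hasHamPath_subtree (hd : IsDepth r p d) (v : V) :
    (d v % 2 = 1 → HasHamPath (IsEdge r p d) (subtree p d v) (maxChildOrSelf r p v) v) ∧
      (d v % 2 = 0 → HasHamPath (IsEdge r p d) (subtree p d v) v (minChildOrSelf r p v)) := by
  have ih := fun c (hc : c ∈ t2pChild r p v) => hd.hasHamPath_subtree c
  have hdc := fun c (hc : c ∈ t2pChild r p v) => hd.depth_of_mem_child hc
  exact ⟨fun hv => hd.hasHamPath_subtree_of_odd hv fun c hc =>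
      (ih c hc).2 (by have := hdc c hc; omega),
    fun hv => hd.hasHamPath_subtree_of_even hv fun c hc =>
      (ih c hc).1 (by have := hdc c hc; omega)⟩
termination_by (subtree p d v).card
decreasing_by exact hd.card_subtree_lt hc

theorem IsDepth.t2pChild_root_nonempty (hd : IsDepth r p d) (hcard : 2 ≤ Fintype.card V) :
    (t2pChild r p r).Nonempty := by
  by_contra hne
  have huniv := hd.subtree_root
  rw [hd.subtree_eq_insert_biUnion, not_nonempty_iff_eq_empty.mp hne, biUnion_empty,
    insert_empty] at huniv
  have := congrArg card huniv
  rw [card_univ, card_singleton] at this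
  omega

end TreeToPath

/-- **Tree-to-Path, root label 0.** For a finite rooted tree (given by a parent map `p`,
root `r` and consistent distances `d`, so labels are `d v % 2` and `l r = 0`), the edges
added by the Tree-to-Path algorithm form a directed Hamiltonian path beginning at `r`
and ending at the minimum child of `r`. -/
theorem tree_to_path_root_label_zero [Fintype V] [LinearOrder V]
    (r : V) (p : V → V) (d : V → ℕ)
    (hcard : 2 ≤ Fintype.card V)
    (hdr : d r = 0)
    (hd : ∀ v, v ≠ r → d v = d (p v) + 1) :
    ∃ f : Fin (Fintype.card V) ≃ V,
      f ⟨0, by omega⟩ = r ∧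
      IsLeast (↑(t2pChild r p r) : Set V) (f ⟨Fintype.card V - 1, by omega⟩) ∧
      ∀ a b : V,
        ((a, b) ∈ (Finset.univ.filter (fun v => v ≠ r)).image (t2pEdge r p d)) ↔
          ∃ i : ℕ, ∃ h : i + 1 < Fintype.card V,
            a = f ⟨i, by omega⟩ ∧ b = f ⟨i + 1, h⟩ := by
  have hdepth : TreeToPath.IsDepth r p d := ⟨hdr, hd⟩
  have hpath := (hdepth.hasHamPath_subtree r).2 (by rw [hdr])
  rw [hdepth.subtree_root] at hpath
  obtain ⟨f, hfirst, hlast, hedges⟩ := hpath.exists_equiv TreeToPath.card_edges_lt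
  have hchild := hdepth.t2pChild_root_nonempty hcard
  refine ⟨f, hfirst _, ?_, hedges⟩
  rw [hlast, TreeToPath.minChildOrSelf, dif_pos hchild]
  exact isLeast_min' _ hchild
end

section
/- Let G' be a graph on n vertices in which every vertex has degree at most 2, exactly one vertex r has an assigned distance value 0, every other vertex v has a parent p(v) with assigned distance d(v) = d(p(v)) + 1 and edge {v, p(v)} in G', and every vertex of degree 2 has an identifier strictly between the identifiers of its two neighbors. If additionally the parent relation covers all vertices except r (each non-root vertex has a parent), then G' is exactly the sorted path on the n distinct identifiers: each vertex is adjacent precisely to its predecessor and successor in identifier order. -/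
/-!
Depth drops by one along every parent link, so each parent chain ends at `r`. At a non-root
vertex, its child and its parent lie on opposite sides of it; hence a chain that takes one step
upwards in the identifier order keeps going upwards until it reaches `r`. So every `v > r` has
`r ≤ p v < v`, and two vertices above `r` cannot share a parent (sortedness at that parent).
Then above `r` the depth determines the position in the order: the vertices above `r` form one
increasing chain whose consecutive members are child and parent, so `p v ⋖ v`. The vertices
below `r` are handled by the order dual.
-/

section

variable {V : Type*} [LinearOrder V] {r : V} {p : V → V} {d : V → ℕ}

theorem le_of_depth_le (hdr : d r = 0) (hd : ∀ v, v ≠ r → d v = d (p v) + 1)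
    (hp : ∀ v, r < v → p v ∈ Set.Ico r v) (hinj : Set.InjOn p (Set.Ioi r))
    {u v : V} (hu : r ≤ u) (hv : r ≤ v) (huv : d u ≤ d v) : u ≤ v := by
  rcases hu.eq_or_lt with rfl | hu
  · exact hv
  have hdu := hd u hu.ne'
  have hv : r < v := hv.lt_of_ne fun hrv => by subst hrv; omega
  have hdv := hd v hv.ne'
  obtain ⟨hpv, hpv_lt⟩ := hp v hv
  obtain ⟨hpu, -⟩ := hp u hu
  rcases huv.lt_or_eq with huv | huv
  · exact (le_of_depth_le hdr hd hp hinj hu.le hpv (by omega)).trans hpv_lt.le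
  · have hpuv : p u = p v :=
      (le_of_depth_le hdr hd hp hinj hpu hpv (by omega)).antisymm
        (le_of_depth_le hdr hd hp hinj hpv hpu (by omega))
    exact (hinj hu hv hpuv).le
termination_by d v

theorem parent_covBy_of_injOn (hdr : d r = 0) (hd : ∀ v, v ≠ r → d v = d (p v) + 1)
    (hp : ∀ v, r < v → p v ∈ Set.Ico r v) (hinj : Set.InjOn p (Set.Ioi r))
    {v : V} (hv : r < v) : p v ⋖ v := by
  obtain ⟨hpv, hpv_lt⟩ := hp v hv
  refine ⟨hpv_lt, fun w hpw hwv => ?_⟩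
  have hw : r ≤ w := hpv.trans hpw.le
  have hdw : d w < d v :=
    lt_of_not_ge fun h => hwv.not_ge (le_of_depth_le hdr hd hp hinj hv.le hw h)
  rw [hd v hv.ne'] at hdw
  exact hpw.not_ge (le_of_depth_le hdr hd hp hinj hw hpv (by omega))

variable (r p d) in
structure IsSortedPathCertificate (A : V → V → Prop) : Prop where
  adj_iff : ∀ u v, A u v ↔
    ((v ≠ r ∧ p v = u ∧ d v = d u + 1) ∨ (u ≠ r ∧ p u = v ∧ d u = d v + 1))
  depth_root : d r = 0
  depth_parent : ∀ v, v ≠ r → d v = d (p v) + 1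
  sorted : ∀ u v w, A u v → A u w → v ≠ w → ((v < u ∧ u < w) ∨ (w < u ∧ u < v))

namespace IsSortedPathCertificate

variable {A : V → V → Prop} {u v : V}

theorem dual (h : IsSortedPathCertificate r p d A) :
    IsSortedPathCertificate (V := Vᵒᵈ) r p d A where
  adj_iff := h.adj_iff
  depth_root := h.depth_root
  depth_parent := h.depth_parent
  sorted u v w huv huw hvw := (h.sorted u v w huv huw hvw).symm.imp And.symm And.symm

theorem adj_symm (h : IsSortedPathCertificate r p d A) (huv : A u v) : A v u :=
  (h.adj_iff v u).2 ((h.adj_iff u v).1 huv).symm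

theorem adj_parent (h : IsSortedPathCertificate r p d A) (hv : v ≠ r) : A (p v) v :=
  (h.adj_iff _ _).2 (Or.inl ⟨hv, rfl, h.depth_parent v hv⟩)

theorem parent_ne_self (h : IsSortedPathCertificate r p d A) (hv : v ≠ r) : p v ≠ v := by
  intro hpv
  have := h.depth_parent v hv
  rw [hpv] at this
  omega

theorem parent_le_root_of_lt_parent (h : IsSortedPathCertificate r p d A) {v : V} (hv : v ≠ r)
    (hlt : v < p v) : p v ≤ r := by
  by_cases hpv : p v = r
  · exact hpv.le
  have hdv := h.depth_parent v hv
  have hdpv := h.depth_parent (p v) hpv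
  have hne : v ≠ p (p v) := fun e => by rw [← e] at hdpv; omega
  have hup : p v < p (p v) :=
    ((h.sorted _ _ _ (h.adj_parent hv) (h.adj_symm (h.adj_parent hpv)) hne).resolve_right
      fun h' => h'.2.not_gt hlt).2
  exact hup.le.trans (h.parent_le_root_of_lt_parent hpv hup)
termination_by d v

theorem parent_mem_Ico (h : IsSortedPathCertificate r p d A) (hv : r < v) :
    p v ∈ Set.Ico r v := by
  have hlt : p v < v := (h.parent_ne_self hv.ne').lt_or_gt.resolve_right fun hgt =>
    (h.parent_le_root_of_lt_parent hv.ne' hgt).not_gt (hv.trans hgt)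
  exact ⟨h.dual.parent_le_root_of_lt_parent hv.ne' hlt, hlt⟩

theorem injOn_parent (h : IsSortedPathCertificate r p d A) : Set.InjOn p (Set.Ioi r) := by
  intro v hv w hw hpvw
  by_contra hne
  have hw' := h.adj_parent (v := w) (ne_of_gt hw)
  rw [← hpvw] at hw'
  rcases h.sorted _ _ _ (h.adj_parent (ne_of_gt hv)) hw' hne with ⟨hvp, -⟩ | ⟨hwp, -⟩
  · exact (h.parent_mem_Ico hv).2.not_gt hvp
  · exact (h.parent_mem_Ico hw).2.not_gt (hpvw ▸ hwp)

theorem parent_covBy (h : IsSortedPathCertificate r p d A) (hv : r < v) : p v ⋖ v :=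
  parent_covBy_of_injOn h.depth_root h.depth_parent (fun _ => h.parent_mem_Ico) h.injOn_parent hv

theorem covBy_parent (h : IsSortedPathCertificate r p d A) (hv : v < r) : v ⋖ p v :=
  (h.dual.parent_covBy hv).ofDual

theorem covBy_or_covBy_of_adj (h : IsSortedPathCertificate r p d A) (huv : A u v) :
    u ⋖ v ∨ v ⋖ u := by
  have edge : ∀ {v}, v ≠ r → p v ⋖ v ∨ v ⋖ p v := fun hv =>
    hv.lt_or_gt.elim (Or.inr ∘ h.covBy_parent) (Or.inl ∘ h.parent_covBy)
  rcases (h.adj_iff u v).1 huv with ⟨hv, rfl, -⟩ | ⟨hu, rfl, -⟩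
  · exact edge hv
  · exact (edge hu).symm

theorem adj_of_covBy (h : IsSortedPathCertificate r p d A) (huv : u ⋖ v) : A u v := by
  rcases le_or_gt r u with hu | hu
  · have hv : r < v := hu.trans_lt huv.lt
    rw [← (h.parent_covBy hv).unique_left huv]
    exact h.adj_parent hv.ne'
  · rw [← (h.covBy_parent hu).unique_right huv]
    exact h.adj_symm (h.adj_parent hu.ne)

theorem adj_iff_covBy (h : IsSortedPathCertificate r p d A) : A u v ↔ u ⋖ v ∨ v ⋖ u :=
  ⟨h.covBy_or_covBy_of_adj, fun huv => huv.elim h.adj_of_covBy (h.adj_symm ∘ h.adj_of_covBy)⟩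

end IsSortedPathCertificate

end

theorem certified_sorted_path_general {V : Type*} [LinearOrder V]
    (r : V) (p : V → V) (d : V → ℕ) (A : V → V → Prop)
    (hA : ∀ u v, A u v ↔
      ((v ≠ r ∧ p v = u ∧ d v = d u + 1) ∨ (u ≠ r ∧ p u = v ∧ d u = d v + 1)))
    (hdr : d r = 0)
    (hd : ∀ v, v ≠ r → d v = d (p v) + 1)
    (hsorted : ∀ u v w, A u v → A u w → v ≠ w →
      ((v < u ∧ u < w) ∨ (w < u ∧ u < v))) :
    ∀ u v, A u v ↔ (u ⋖ v ∨ v ⋖ u) :=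
  fun _ _ => IsSortedPathCertificate.adj_iff_covBy ⟨hA, hdr, hd, hsorted⟩

/-- **Certified sorted path.** Suppose every vertex except a unique root `r` has a
declared parent `p v` with declared distance `d v = d (p v) + 1` and `d r = 0`, the
graph `A` consists exactly of the parent-child edges (with distances differing by 1),
every vertex has at most two `A`-neighbors, and every vertex with two distinct
neighbors lies strictly between them in identifier order.  Then `A` is exactly the
sorted path: `u` and `v` are adjacent iff one covers the other in the linear order. -/
theorem certified_sorted_path {V : Type*} [Fintype V] [LinearOrder V]
    (r : V) (p : V → V) (d : V → ℕ) (A : V → V → Prop)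
    (hA : ∀ u v, A u v ↔
      ((v ≠ r ∧ p v = u ∧ d v = d u + 1) ∨ (u ≠ r ∧ p u = v ∧ d u = d v + 1)))
    (hdr : d r = 0)
    (hd : ∀ v, v ≠ r → d v = d (p v) + 1)
    (hdeg : ∀ u, Set.ncard {v | A u v} ≤ 2)
    (hsorted : ∀ u v w, A u v → A u w → v ≠ w →
      ((v < u ∧ u < w) ∨ (w < u ∧ u < v))) :
    ∀ u v, A u v ↔ (u ⋖ v ∨ v ⋖ u) :=
  certified_sorted_path_general r p d A hA hdr hd hsorted
end

section
/- For every n there exists a weakly connected initial communication graph on n vertices (e.g., a directed path) and a pair of vertices u, v that are adjacent in the target sorted-path topology but at distance Ω(n) in the initial graph, such that any Sybil-resistant distributed overlay algorithm — i.e., one in which new edges may only be created between identifiers already present in a node's memory or channel — requires Ω(log n) synchronous rounds before u and v can be connected, regardless of any advice from a supervisor. Hence the convergence time to the target topology is Ω(log n). -/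
/-!
Each round at most doubles the initial distance an identifier can bridge: if `u` learns `v` in
round `t + 1`, then after round `t` it knew some `x` that knew `v`, so by the triangle inequality
`dist u v ≤ 2 ^ t + 2 ^ t`. Hence after `t` rounds every known identifier lies within initial
distance `2 ^ t`. On the path `0 – 2 – 3 – ⋯ – (n-1) – 1` the
order-neighbours `0` and `1` are at distance `n - 1`, so `1` reaches `0` only once
`n - 1 ≤ 2 ^ t`, i.e. `t ≥ ⌈log₂ (n - 1)⌉`.
-/

open SimpleGraph

namespace SimpleGraph

variable {V : Type*} {G : SimpleGraph V} {u v : V}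

lemma Walk.le_add_length_of_adj {f : V → ℕ} (hf : ∀ x y, G.Adj x y → f y ≤ f x + 1)
    (p : G.Walk u v) : f v ≤ f u + p.length := by
  induction p with
  | nil => simp
  | cons hadj _ ih =>
    rw [Walk.length_cons]
    have := hf _ _ hadj
    omega

lemma Reachable.le_add_dist {f : V → ℕ} (hf : ∀ x y, G.Adj x y → f y ≤ f x + 1)
    (hr : G.Reachable u v) : f v ≤ f u + G.dist u v := by
  obtain ⟨p, hp⟩ := hr.exists_walk_length_eq_dist
  exact hp ▸ p.le_add_length_of_adj hf

lemma dist_lt_card [Fintype V] (G : SimpleGraph V) (u v : V) : G.dist u v < Fintype.card V := by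
  by_cases hr : G.Reachable u v
  · obtain ⟨p, hpath, hp⟩ := hr.exists_path_of_dist
    exact hp ▸ hpath.length_lt
  · rw [dist_eq_zero_of_not_reachable hr]
    exact Fintype.card_pos_iff.mpr ⟨u⟩

lemma Connected.dist_le_two_pow_of_mem {K : ℕ → V → Set V} (hG : G.Connected)
    (h0 : ∀ w, K 0 w ⊆ insert w (G.neighborSet w))
    (hstep : ∀ t w, K (t + 1) w ⊆ ⋃ x ∈ K t w, K t x) :
    ∀ t, v ∈ K t u → G.dist u v ≤ 2 ^ t := by
  intro t
  induction t generalizing u v with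
  | zero =>
    intro hv
    rcases h0 u hv with rfl | hadj
    · simp
    · exact (dist_eq_one_iff_adj.mpr hadj).le
  | succ t ih =>
    intro hv
    obtain ⟨x, hx, hvx⟩ := Set.mem_iUnion₂.mp (hstep t u hv)
    calc G.dist u v ≤ G.dist u x + G.dist x v := hG.dist_triangle
      _ ≤ 2 ^ t + 2 ^ t := Nat.add_le_add (ih hx) (ih hvx)
      _ = 2 ^ (t + 1) := by ring

end SimpleGraph

/-- The path `0 – 2 – 3 – ⋯ – (m + 1) – 1`. -/
def swapPathGraph (m : ℕ) : SimpleGraph (Fin (m + 2)) :=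
  (pathGraph (m + 2)).comap (Equiv.swap 1 (Fin.last (m + 1))).toEmbedding

lemma swapPathGraph_connected (m : ℕ) : (swapPathGraph m).Connected :=
  (Iso.comap _ _).connected_iff.mpr (pathGraph_connected (m + 1))

lemma swapPathGraph_dist_zero_one (m : ℕ) : (swapPathGraph m).dist 0 1 = m + 1 := by
  set e : Fin (m + 2) ≃ Fin (m + 2) := Equiv.swap 1 (Fin.last (m + 1))
  have he0 : e 0 = 0 := Equiv.swap_apply_of_ne_of_ne (by simp) (by simp [Fin.ext_iff])
  have he1 : e 1 = Fin.last (m + 1) := Equiv.swap_apply_left _ _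
  have hf : ∀ x y, (swapPathGraph m).Adj x y → (e y).val ≤ (e x).val + 1 := fun x y hxy => by
    have : (pathGraph (m + 2)).Adj (e x) (e y) := hxy
    rcases pathGraph_adj.mp this with h | h <;> omega
  have hlower := ((swapPathGraph_connected m).preconnected 0 1).le_add_dist hf
  have hupper := (swapPathGraph m).dist_lt_card 0 1
  rw [he0, he1] at hlower
  simp only [Fin.val_last, Fin.val_zero, Fintype.card_fin] at hlower hupper
  omega

/-- **Lower bound for Sybil-resistant stabilization.**  For every `n ≥ 2` there is a
weakly connected initial communication graph on `n` nodes and two nodes `u, v` that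
are adjacent in the target sorted-path topology (`u ⋖ v` in identifier order) but at
distance `n - 1 = Ω(n)` initially, such that for any Sybil-resistant dynamics — where
identifiers spread only along existing connections, i.e. initial knowledge is the
closed neighborhood and each round's knowledge is contained in the union of the
knowledge of known nodes, regardless of any supervisor advice — node `u` cannot hold
`v`'s identifier before round `⌈log₂ (n-1)⌉ = Ω(log n)`.  Hence convergence to the
target topology takes `Ω(log n)` rounds. -/
theorem sybil_resistant_lower_bound (n : ℕ) (hn : 2 ≤ n) :
    ∃ G : SimpleGraph (Fin n), G.Connected ∧
      ∃ u v : Fin n, u ⋖ v ∧ G.dist u v = n - 1 ∧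
        ∀ K : ℕ → Fin n → Set (Fin n),
          (∀ w, K 0 w ⊆ insert w (G.neighborSet w)) →
          (∀ t w, K (t + 1) w ⊆ ⋃ x ∈ K t w, K t x) →
          ∀ t, v ∈ K t u → Nat.clog 2 (n - 1) ≤ t := by
  obtain ⟨m, rfl⟩ : ∃ m, n = m + 2 := ⟨n - 2, by omega⟩
  have hdist := swapPathGraph_dist_zero_one m
  refine ⟨swapPathGraph m, swapPathGraph_connected m, 0, 1, ?_, by simpa using hdist, ?_⟩
  · rw [Fin.covBy_iff, Nat.covBy_iff_add_one_eq]
    simp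
  · intro K h0 hstep t hv
    have := (swapPathGraph_connected m).dist_le_two_pow_of_mem h0 hstep t hv
    exact (Nat.clog_le_iff_le_pow one_lt_two).mpr (by omega)
end

section
/- Let V be a finite set of vertices with distinct identifiers, and suppose each vertex v is assigned a set c-ids(v) of identifiers satisfying: |c-ids(v)| ≤ 2; if |c-ids(v)| = 2 then min(c-ids(v)) < id(v) < max(c-ids(v)); the relation is symmetric (u ∈ c-ids(v) iff v ∈ c-ids(u)); and the resulting graph is a spanning tree of V. Then the graph is exactly the sorted path on V: every vertex's c-ids are precisely its predecessor and/or successor in identifier order. -/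
/-! If every vertex lies strictly between any two of its neighbours, a path that steps upwards
once keeps going upwards, so every path is strictly monotone. In a connected such graph, the
path from `a` to any `c > a` therefore first steps to a vertex of `(a, c]`, which has to be the
only neighbour of `a` above `a`. For `c` the successor of `a` this neighbour is `c` itself,
and a neighbour `b > a` leaves no room for a `c` with `a < c < b`. -/

namespace SimpleGraph

variable {V : Type*} [LinearOrder V] {G : SimpleGraph V}

def IsLocallySorted (G : SimpleGraph V) : Prop :=
  ∀ ⦃v a b⦄, G.Adj v a → G.Adj v b → a ≠ b → a < v ∧ v < b ∨ b < v ∧ v < a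

namespace IsLocallySorted

theorem lt_iff_lt (hG : G.IsLocallySorted) {v a b : V} (ha : G.Adj v a) (hb : G.Adj v b)
    (hab : a ≠ b) : a < v ↔ v < b := by
  rcases hG ha hb hab with ⟨hav, hvb⟩ | ⟨hbv, hva⟩
  · exact iff_of_true hav hvb
  · exact iff_of_false (lt_asymm hva) (lt_asymm hbv)

theorem isChain_support (hG : G.IsLocallySorted) :
    ∀ {x y : V} (p : G.Walk x y), p.IsPath →
      p.support.IsChain (· < ·) ∨ p.support.IsChain (· > ·)
  | _, _, .nil, _ => by simp
  | _, _, .cons h .nil, _ => by simpa using h.ne.lt_or_gt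
  | x, _, .cons (v := v) hxv (.cons (v := u) hvu q), hp => by
    rw [Walk.cons_isPath_iff] at hp
    have hxu : x ≠ u := fun e => hp.2 (by simp [e])
    have hstep : x < v ↔ v < u := hG.lt_iff_lt hxv.symm hvu hxu
    have ih := hG.isChain_support _ hp.1
    rw [Walk.support_cons, ← q.cons_tail_support] at ih
    rw [Walk.support_cons, Walk.support_cons, ← q.cons_tail_support]
    simp only [List.isChain_cons_cons] at ih ⊢
    rcases ih with hc | hc
    · exact .inl ⟨hstep.mpr hc.1, hc⟩
    · exact .inr ⟨lt_of_le_of_ne (not_lt.mp fun h => lt_asymm hc.1 (hstep.mp h)) hxv.ne', hc⟩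

theorem snd_mem_Ioc (hG : G.IsLocallySorted) {x y : V} (p : G.Walk x y) (hp : p.IsPath)
    (hxy : x < y) : p.snd ∈ Set.Ioc x y := by
  have hy : y ∈ p.tail.support := p.tail.end_mem_support
  rcases hG.isChain_support p hp with hc | hc <;>
    rw [← Walk.cons_support_tail (Walk.not_nil_of_ne hxy.ne), List.isChain_iff_pairwise] at hc
  · refine ⟨List.rel_of_pairwise_cons hc p.tail.start_mem_support, ?_⟩
    rw [← p.tail.cons_tail_support] at hc hy
    rcases List.mem_cons.mp hy with hy | hy
    · exact hy.ge
    · exact (List.rel_of_pairwise_cons hc.of_cons hy).le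
  · exact absurd (List.rel_of_pairwise_cons hc hy) (lt_asymm hxy)

theorem covBy_of_adj (hG : G.IsLocallySorted) (hconn : G.Preconnected)
    {a b : V} (hab : G.Adj a b) (hlt : a < b) : a ⋖ b := by
  refine ⟨hlt, fun c hac hcb => ?_⟩
  obtain ⟨p, hp⟩ := hconn.exists_isPath a c
  obtain ⟨hasnd, hsndc⟩ := hG.snd_mem_Ioc p hp hac
  have hsnd : G.Adj a p.snd := p.adj_snd (Walk.not_nil_of_ne hac.ne)
  exact lt_asymm hasnd ((hG.lt_iff_lt hsnd hab (hsndc.trans_lt hcb).ne).mpr hlt)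

theorem adj_of_covBy (hG : G.IsLocallySorted) (hconn : G.Preconnected)
    {a b : V} (h : a ⋖ b) : G.Adj a b := by
  obtain ⟨p, hp⟩ := hconn.exists_isPath a b
  obtain ⟨hasnd, hsndb⟩ := hG.snd_mem_Ioc p hp h.lt
  rw [← hsndb.eq_of_not_lt (h.2 hasnd)]
  exact p.adj_snd (Walk.not_nil_of_ne h.lt.ne)

theorem adj_iff_covBy (hG : G.IsLocallySorted) (hconn : G.Preconnected)
    {a b : V} : G.Adj a b ↔ a ⋖ b ∨ b ⋖ a := by
  refine ⟨fun h => ?_, ?_⟩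
  · rcases h.ne.lt_or_gt with hlt | hlt
    · exact .inl (hG.covBy_of_adj hconn h hlt)
    · exact .inr (hG.covBy_of_adj hconn h.symm hlt)
  · rintro (h | h)
    · exact hG.adj_of_covBy hconn h
    · exact (hG.adj_of_covBy hconn h).symm

end IsLocallySorted

end SimpleGraph

theorem locally_sorted_tree_is_sorted_path_general {V : Type*} [LinearOrder V]
    (cids : V → Finset V)
    (hdeg : ∀ v, (cids v).card ≤ 2)
    (hirr : ∀ v, v ∉ cids v)
    (hsymm : ∀ u v, u ∈ cids v ↔ v ∈ cids u)
    (hsorted : ∀ v, (cids v).card = 2 → ∀ a ∈ cids v, ∀ b ∈ cids v, a ≠ b →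
      ((a < v ∧ v < b) ∨ (b < v ∧ v < a)))
    (htree : (SimpleGraph.fromRel (fun u v => u ∈ cids v)).IsTree) :
    ∀ u v, u ∈ cids v ↔ (u ⋖ v ∨ v ⋖ u) := by
  set G := SimpleGraph.fromRel (fun u v => u ∈ cids v)
  have hadj : ∀ u v, G.Adj u v ↔ u ∈ cids v := fun u v => by
    rw [SimpleGraph.fromRel_adj, ← hsymm u v, or_self]
    exact ⟨And.right, fun h => ⟨fun e => hirr v (e ▸ h), h⟩⟩
  have hsortedG : G.IsLocallySorted := by
    intro v a b hva hvb hab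
    have ha : a ∈ cids v := (hsymm a v).mpr ((hadj v a).mp hva)
    have hb : b ∈ cids v := (hsymm b v).mpr ((hadj v b).mp hvb)
    have hcard : (cids v).card = 2 := le_antisymm (hdeg v) <|
      Finset.card_pair hab ▸ Finset.card_le_card (by simp [Finset.insert_subset_iff, ha, hb])
    exact hsorted v hcard a ha b hb hab
  intro u v
  rw [← hadj]
  exact hsortedG.adj_iff_covBy htree.connected.preconnected

/-- **Locally sorted spanning tree is the sorted path.**  Suppose each vertex `v` of a
finite linearly ordered vertex set stores a set `cids v` of at most two neighbor ids,
not containing `v` itself, the relation is symmetric, every vertex with two distinct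
stored ids lies strictly between them, and the resulting graph is a spanning tree.
Then the graph is exactly the sorted path: `u ∈ cids v` iff `u` and `v` are
consecutive in identifier order. -/
theorem locally_sorted_tree_is_sorted_path {V : Type*} [Fintype V] [LinearOrder V]
    (cids : V → Finset V)
    (hdeg : ∀ v, (cids v).card ≤ 2)
    (hirr : ∀ v, v ∉ cids v)
    (hsymm : ∀ u v, u ∈ cids v ↔ v ∈ cids u)
    (hsorted : ∀ v, (cids v).card = 2 → ∀ a ∈ cids v, ∀ b ∈ cids v, a ≠ b →
      ((a < v ∧ v < b) ∨ (b < v ∧ v < a)))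
    (htree : (SimpleGraph.fromRel (fun u v => u ∈ cids v)).IsTree) :
    ∀ u v, u ∈ cids v ↔ (u ⋖ v ∨ v ⋖ u) :=
  locally_sorted_tree_is_sorted_path_general cids hdeg hirr hsymm hsorted htree
end
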